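/- arXiv:1202.5705 — 5 statements merged into one kernel-verified Lean document; each statement's English description precedes it below -/
import Mathlib

section
/- For every real number s, the regularized series g_\varepsilon(s) converges for each \varepsilon > 0, and g_\varepsilon(s) \to g_0(s) as \varepsilon \to 0^+, i.e. the Gaussian-regularized sums converge pointwise on \mathbb{R} to the sum of the unregularized series. -/
/-!
The partial sums of `sin ((p + 1) θ)` are the imaginary parts of geometric sums of `e^{iθ}`, hence
bounded, so Dirichlet's test gives convergence of `∑ sin (2π(p + 1)s) / (p + 1)`. With
`x = e^{-ε}`, the regularized sum is the lacunary power series `∑ aₚ x ^ (p + 1)²`, i.e. the power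
series with coefficient `aₚ` at `(p + 1)²` and `0` elsewhere. Its partial sums are those of `∑ aₚ`
along a reindexing tending to infinity, so Abel's limit theorem as `x → 1⁻` gives the limit.
-/

open Filter Topology Real Finset Function

theorem norm_sum_range_pow_le {𝕜 : Type*} [NormedField 𝕜] {w : 𝕜} (hw : ‖w‖ ≤ 1)
    (hw1 : w ≠ 1) (n : ℕ) : ‖∑ i ∈ range n, w ^ i‖ ≤ 2 / ‖w - 1‖ := by
  rw [geom_sum_eq hw1, norm_div]
  gcongr
  calc ‖w ^ n - 1‖ ≤ ‖w ^ n‖ + ‖(1 : 𝕜)‖ := norm_sub_le _ _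
    _ ≤ 1 + 1 := by
      rw [norm_pow, norm_one]
      gcongr
      exact pow_le_one₀ (norm_nonneg w) hw
    _ = 2 := one_add_one_eq_two

theorem exists_abs_sum_range_sin_le (θ : ℝ) :
    ∃ C, ∀ n, |∑ p ∈ range n, sin ((p + 1) * θ)| ≤ C := by
  set w := Complex.exp (θ * Complex.I)
  have hw : ‖w‖ = 1 := Complex.norm_exp_ofReal_mul_I θ
  have hsin (p : ℕ) : sin ((p + 1) * θ) = (w ^ (p + 1)).im := by
    rw [← Complex.exp_nat_mul, ← mul_assoc]
    exact_mod_cast (Complex.exp_ofReal_mul_I_im ((p + 1) * θ)).symm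
  by_cases hw1 : w = 1
  · exact ⟨0, fun n => by simp [hsin, hw1]⟩
  refine ⟨2 / ‖w - 1‖, fun n => ?_⟩
  calc |∑ p ∈ range n, sin ((p + 1) * θ)| = |(∑ p ∈ range n, w ^ (p + 1)).im| := by
        simp only [hsin, Complex.im_sum]
    _ ≤ ‖∑ p ∈ range n, w ^ (p + 1)‖ := Complex.abs_im_le_norm _
    _ = ‖∑ p ∈ range n, w ^ p‖ := by simp only [pow_succ, ← sum_mul, norm_mul, hw, mul_one]
    _ ≤ 2 / ‖w - 1‖ := norm_sum_range_pow_le hw.le hw1 n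

theorem exists_tendsto_sum_range_sin_div (θ : ℝ) :
    ∃ l, Tendsto (fun n : ℕ => ∑ p ∈ range n, sin ((p + 1) * θ) / (p + 1)) atTop (𝓝 l) := by
  obtain ⟨C, hC⟩ := exists_abs_sum_range_sin_le θ
  have hanti : Antitone fun p : ℕ => 1 / ((p : ℝ) + 1) := fun m n hmn =>
    one_div_le_one_div_of_le (by positivity) (by gcongr)
  obtain ⟨l, hl⟩ := cauchySeq_tendsto_of_complete <|
    hanti.cauchySeq_series_mul_of_tendsto_zero_of_bounded
      tendsto_one_div_add_atTop_nhds_zero_nat (z := fun p : ℕ => sin ((p + 1) * θ)) hC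
  refine ⟨l, hl.congr fun n => sum_congr rfl fun p _ => ?_⟩
  rw [smul_eq_mul, one_div_mul_eq_div]

section Lacunary

variable {f : ℕ → ℕ}

theorem StrictMono.filter_range_lt_eq_range_card (hf : StrictMono f) (n : ℕ) :
    {p ∈ range n | f p < n} = range #{p ∈ range n | f p < n} := by
  refine eq_of_subset_of_card_le (fun p hp => ?_) (card_range _).le
  have hlower : range (p + 1) ⊆ {p ∈ range n | f p < n} := fun q hq => by
    simp only [mem_filter, mem_range] at hp hq ⊢
    have hfq : f q < n := (hf.monotone (Nat.lt_succ_iff.mp hq)).trans_lt hp.2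
    exact ⟨(hf.id_le q).trans_lt hfq, hfq⟩
  simpa using card_le_card hlower

theorem StrictMono.sum_range_extend_zero {M : Type*} [AddCommMonoid M] (hf : StrictMono f)
    (a : ℕ → M) (n : ℕ) :
    ∑ i ∈ range n, extend f a 0 i = ∑ p ∈ range #{p ∈ range n | f p < n}, a p := by
  rw [← hf.filter_range_lt_eq_range_card, ← sum_preimage f (range n) hf.injective.injOn
    (extend f a 0) fun i _ hi => extend_apply' _ _ _ fun ⟨p, hp⟩ => hi ⟨p, hp⟩]
  refine sum_congr ?_ fun p _ => hf.injective.extend_apply a 0 p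
  ext p
  simp only [mem_preimage, mem_filter, mem_range, iff_and_self]
  exact (hf.id_le p).trans_lt

theorem StrictMono.tendsto_card_filter_range_lt (hf : StrictMono f) :
    Tendsto (fun n => #{p ∈ range n | f p < n}) atTop atTop := by
  refine tendsto_atTop_atTop.mpr fun m => ⟨f m, fun n hn => ?_⟩
  have hsub : range m ⊆ {p ∈ range n | f p < n} := fun p hp => by
    simp only [mem_filter, mem_range] at hp ⊢
    have hfp : f p < n := (hf hp).trans_le hn
    exact ⟨(hf.id_le p).trans_lt hfp, hfp⟩
  simpa using card_le_card hsub

theorem StrictMono.tendsto_sum_range_extend_zero {M : Type*} [AddCommMonoid M]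
    [TopologicalSpace M] (hf : StrictMono f) {a : ℕ → M} {l : M}
    (h : Tendsto (fun n => ∑ p ∈ range n, a p) atTop (𝓝 l)) :
    Tendsto (fun n => ∑ i ∈ range n, extend f a 0 i) atTop (𝓝 l) := by
  simpa only [hf.sum_range_extend_zero, comp_def] using h.comp hf.tendsto_card_filter_range_lt

theorem StrictMono.tendsto_tsum_mul_pow_nhdsLT_one (hf : StrictMono f) {a : ℕ → ℝ} {l : ℝ}
    (h : Tendsto (fun n => ∑ p ∈ range n, a p) atTop (𝓝 l)) :
    Tendsto (fun x => ∑' p, a p * x ^ f p) (𝓝[<] 1) (𝓝 l) := by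
  refine (Real.tendsto_tsum_powerSeries_nhdsWithin_lt
    (hf.tendsto_sum_range_extend_zero h)).congr fun x => ?_
  have hsupp : support (fun i => extend f a 0 i * x ^ i) ⊆ Set.range f := fun i hi => by
    by_contra hi'
    exact hi (by simp [extend_apply' _ _ _ fun ⟨p, hp⟩ => hi' ⟨p, hp⟩])
  simp only [← hf.injective.tsum_eq hsupp, hf.injective.extend_apply]

theorem StrictMono.summable_mul_pow (hf : StrictMono f) {a : ℕ → ℝ} {C : ℝ}
    (ha : ∀ p, |a p| ≤ C) {x : ℝ} (hx0 : 0 ≤ x) (hx1 : x < 1) :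
    Summable fun p => a p * x ^ f p := by
  refine .of_norm_bounded ((summable_geometric_of_lt_one hx0 hx1).mul_left C) fun p => ?_
  rw [norm_mul, norm_pow, Real.norm_of_nonneg hx0, Real.norm_eq_abs]
  exact mul_le_mul (ha p) (pow_le_pow_of_le_one hx0 hx1.le (hf.id_le p)) (by positivity)
    ((abs_nonneg _).trans (ha p))

end Lacunary

theorem exp_neg_mul_add_one_sq (ε : ℝ) (p : ℕ) :
    exp (-ε * ((p : ℝ) + 1) ^ 2) = exp (-ε) ^ (p + 1) ^ 2 := by
  rw [← Real.exp_nat_mul]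
  push_cast
  ring_nf

theorem strictMono_add_one_sq : StrictMono fun p : ℕ => (p + 1) ^ 2 :=
  fun _ _ h => Nat.pow_lt_pow_left (Nat.succ_lt_succ h) two_ne_zero

theorem summable_mul_exp_neg_mul_add_one_sq {a : ℕ → ℝ} {C : ℝ} (ha : ∀ p, |a p| ≤ C)
    {ε : ℝ} (hε : 0 < ε) : Summable fun p : ℕ => a p * exp (-ε * ((p : ℝ) + 1) ^ 2) := by
  simpa only [exp_neg_mul_add_one_sq] using
    strictMono_add_one_sq.summable_mul_pow ha (exp_nonneg _)
      (exp_lt_one_iff.mpr (neg_neg_of_pos hε))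

theorem tendsto_exp_neg_nhdsGT_zero : Tendsto (fun ε : ℝ => exp (-ε)) (𝓝[>] 0) (𝓝[<] 1) := by
  refine tendsto_nhdsWithin_of_tendsto_nhds_of_eventually_within _ ?_ ?_
  · simpa [comp_def] using
      ((continuous_exp.comp continuous_neg).tendsto 0).mono_left nhdsWithin_le_nhds
  · exact eventually_nhdsWithin_of_forall fun ε hε => exp_lt_one_iff.mpr (neg_neg_of_pos hε)

theorem tendsto_tsum_mul_exp_neg_mul_add_one_sq {a : ℕ → ℝ} {l : ℝ}
    (h : Tendsto (fun n => ∑ p ∈ range n, a p) atTop (𝓝 l)) :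
    Tendsto (fun ε : ℝ => ∑' p, a p * exp (-ε * ((p : ℝ) + 1) ^ 2)) (𝓝[>] 0) (𝓝 l) := by
  simpa only [comp_def, exp_neg_mul_add_one_sq] using
    (strictMono_add_one_sq.tendsto_tsum_mul_pow_nhdsLT_one h).comp tendsto_exp_neg_nhdsGT_zero

/-- For every real `s`, the unregularized series `g₀(s) = ∑_{p≥1} sin(2πps)/p` converges,
for each `ε > 0` the Gaussian-regularized series `g_ε(s) = ∑_{p≥1} sin(2πps)/p · e^{-εp²}`
is summable, and `g_ε(s) → g₀(s)` as `ε → 0⁺`. -/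
theorem regularized_tendsto_unregularized (s : ℝ) :
    ∃ g0 : ℝ,
      Filter.Tendsto
        (fun N : ℕ => ∑ p ∈ Finset.range N,
          Real.sin (2 * Real.pi * ((p : ℝ) + 1) * s) / ((p : ℝ) + 1))
        Filter.atTop (𝓝 g0) ∧
      (∀ ε : ℝ, 0 < ε →
        Summable (fun p : ℕ =>
          Real.sin (2 * Real.pi * ((p : ℝ) + 1) * s) / ((p : ℝ) + 1)
            * Real.exp (-ε * ((p : ℝ) + 1) ^ 2))) ∧
      Filter.Tendsto
        (fun ε : ℝ => ∑' p : ℕ,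
          Real.sin (2 * Real.pi * ((p : ℝ) + 1) * s) / ((p : ℝ) + 1)
            * Real.exp (-ε * ((p : ℝ) + 1) ^ 2))
        (𝓝[>] 0) (𝓝 g0) := by
  have hangle (p : ℕ) : 2 * π * ((p : ℝ) + 1) * s = ((p : ℝ) + 1) * (2 * π * s) := by ring
  obtain ⟨g0, hg0⟩ := exists_tendsto_sum_range_sin_div (2 * π * s)
  simp only [← hangle] at hg0
  have hbound (p : ℕ) : |sin (2 * π * ((p : ℝ) + 1) * s) / ((p : ℝ) + 1)| ≤ 1 := by
    rw [abs_div, div_le_one (by positivity)]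
    exact (abs_sin_le_one _).trans ((le_add_of_nonneg_left p.cast_nonneg).trans (le_abs_self _))
  exact ⟨g0, hg0, fun ε hε => summable_mul_exp_neg_mul_add_one_sq hbound hε,
    tendsto_tsum_mul_exp_neg_mul_add_one_sq hg0⟩
end

section
/- For every s \in (0, 1/2), every \varepsilon \geq 0, and every integer N \geq 1, the tail of the regularized series satisfies \left| \sum_{p=N}^{\infty} \frac{\sin(2\pi p s)}{p} e^{-\varepsilon p^2} \right| \leq \frac{1}{N \sin(\pi s)}. -/
/-!
Abel summation: the weights `e^{-εp²}/p` decrease to `0` starting from at most `1/N`, and the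
partial sums of `sin(2πps)` are imaginary parts of geometric sums of `e^{2πis}`, hence bounded
by `2 / |e^{2πis} - 1| = 1 / sin(πs)`. Summation by parts bounds every partial sum of the tail,
and so its limit, by the product of these two bounds.
-/

open Filter Topology Real Finset

section Dirichlet

variable {E : Type*} [NormedAddCommGroup E] [NormedSpace ℝ E] {f : ℕ → ℝ} {z : ℕ → E} {C : ℝ}

theorem Antitone.norm_sum_range_smul_le (hf : Antitone f) (hf0 : ∀ i, 0 ≤ f i)
    (hz : ∀ n, ‖∑ i ∈ range n, z i‖ ≤ C) (n : ℕ) :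
    ‖∑ i ∈ range n, f i • z i‖ ≤ f 0 * C := by
  have hstep : ∀ i, ‖(f (i + 1) - f i) • ∑ j ∈ range (i + 1), z j‖ ≤ (f i - f (i + 1)) * C :=
    fun i => by
      rw [norm_smul, Real.norm_eq_abs, abs_sub_comm, abs_of_nonneg (sub_nonneg.2 (hf i.le_succ))]
      exact mul_le_mul_of_nonneg_left (hz _) (sub_nonneg.2 (hf i.le_succ))
  calc ‖∑ i ∈ range n, f i • z i‖
      ≤ ‖f (n - 1) • ∑ i ∈ range n, z i‖
        + ‖∑ i ∈ range (n - 1), (f (i + 1) - f i) • ∑ j ∈ range (i + 1), z j‖ := by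
        rw [sum_range_by_parts]; exact norm_sub_le _ _
    _ ≤ f (n - 1) * C + ∑ i ∈ range (n - 1), (f i - f (i + 1)) * C := by
        rw [norm_smul, Real.norm_of_nonneg (hf0 _)]
        exact add_le_add (mul_le_mul_of_nonneg_left (hz n) (hf0 _))
          ((norm_sum_le _ _).trans (sum_le_sum fun i _ => hstep i))
    _ = f 0 * C := by rw [← sum_mul, sum_range_sub']; ring

theorem Antitone.exists_tendsto_sum_range_smul_norm_le [CompleteSpace E] (hf : Antitone f)
    (hf_lim : Tendsto f atTop (𝓝 0)) (hz : ∀ n, ‖∑ i ∈ range n, z i‖ ≤ C) :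
    ∃ T, Tendsto (fun n => ∑ i ∈ range n, f i • z i) atTop (𝓝 T) ∧ ‖T‖ ≤ f 0 * C := by
  obtain ⟨T, hT⟩ := cauchySeq_tendsto_of_complete
    (hf.cauchySeq_series_mul_of_tendsto_zero_of_bounded hf_lim hz)
  exact ⟨T, hT, le_of_tendsto' hT.norm (hf.norm_sum_range_smul_le (hf.le_of_tendsto hf_lim) hz)⟩

end Dirichlet

theorem abs_sum_Ico_sin_two_mul_le {x : ℝ} (hx : sin x ≠ 0) (m n : ℕ) :
    |∑ p ∈ Ico m n, sin (2 * x * p)| ≤ 1 / |sin x| := by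
  rcases lt_or_ge n m with hnm | hmn
  · rw [Ico_eq_empty_of_le hnm.le, sum_empty, abs_zero]
    positivity
  set w : ℂ := Complex.exp (↑(2 * x) * Complex.I)
  have hw_pow : ∀ p : ℕ, w ^ p = Complex.exp (↑(2 * x * p) * Complex.I) := fun p => by
    rw [← Complex.exp_nat_mul]; push_cast; ring_nf
  have hw_sub : ‖w - 1‖ = 2 * |sin x| := by
    rw [show w = Complex.exp (Complex.I * ↑(2 * x)) from congrArg _ (mul_comm _ _),
      Complex.norm_exp_I_mul_ofReal_sub_one]
    simp
  have hw : w ≠ 1 := fun h => by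
    rw [h, sub_self, norm_zero] at hw_sub
    exact hx (abs_eq_zero.1 (by linarith))
  calc |∑ p ∈ Ico m n, sin (2 * x * p)| = |(∑ p ∈ Ico m n, w ^ p).im| := by
        simp only [Complex.im_sum, hw_pow, Complex.exp_ofReal_mul_I_im]
    _ ≤ ‖(w ^ n - w ^ m) / (w - 1)‖ := by
        rw [← geom_sum_Ico hw hmn]; exact Complex.abs_im_le_norm _
    _ ≤ (‖w ^ n‖ + ‖w ^ m‖) / (2 * |sin x|) := by
        rw [norm_div, hw_sub]; gcongr; exact norm_sub_le _ _
    _ = 1 / |sin x| := by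
        simp only [hw_pow, Complex.norm_exp_ofReal_mul_I]; field_simp; norm_num

theorem antitoneOn_exp_neg_mul_sq_div {ε : ℝ} (hε : 0 ≤ ε) :
    AntitoneOn (fun x => exp (-ε * x ^ 2) / x) (Set.Ioi 0) := by
  intro x (hx : 0 < x) y _ hxy
  have hsq : ε * x ^ 2 ≤ ε * y ^ 2 := by gcongr
  exact div_le_div₀ (exp_pos _).le (exp_le_exp.2 (by linarith)) hx hxy

theorem exp_neg_mul_sq_div_le_one_div {ε x : ℝ} (hε : 0 ≤ ε) (hx : 0 ≤ x) :
    exp (-ε * x ^ 2) / x ≤ 1 / x :=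
  div_le_div_of_nonneg_right (exp_le_one_iff.2 (by nlinarith [sq_nonneg x])) hx

/-- For `s ∈ (0, 1/2)`, `ε ≥ 0` and `N ≥ 1`, the tail `∑_{p=N}^∞ sin(2πps)/p · e^{-εp²}`
of the regularized series converges and its sum is bounded by `1/(N sin(πs))`. -/
theorem tail_bound (s : ℝ) (hs : s ∈ Set.Ioo (0 : ℝ) (1 / 2))
    (ε : ℝ) (hε : 0 ≤ ε) (N : ℕ) (hN : 1 ≤ N) :
    ∃ T : ℝ,
      Filter.Tendsto
        (fun M : ℕ => ∑ p ∈ Finset.Ico N M,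
          Real.sin (2 * Real.pi * (p : ℝ) * s) / (p : ℝ) * Real.exp (-ε * (p : ℝ) ^ 2))
        Filter.atTop (𝓝 T) ∧
      |T| ≤ 1 / ((N : ℝ) * Real.sin (Real.pi * s)) := by
  have hsin : 0 < sin (π * s) :=
    sin_pos_of_pos_of_lt_pi (by nlinarith [hs.1, pi_pos]) (by nlinarith [hs.2, pi_pos])
  set f : ℕ → ℝ := fun i => exp (-ε * ((N + i : ℕ) : ℝ) ^ 2) / ((N + i : ℕ) : ℝ)
  set z : ℕ → ℝ := fun i => sin (2 * π * ((N + i : ℕ) : ℝ) * s)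
  have hpos : ∀ i, ((N + i : ℕ) : ℝ) ∈ Set.Ioi 0 := fun i => by
    simp only [Set.mem_Ioi, Nat.cast_pos]; omega
  have hf : Antitone f := fun i j hij =>
    antitoneOn_exp_neg_mul_sq_div hε (hpos i) (hpos j) (by gcongr)
  have hf_lim : Tendsto f atTop (𝓝 0) :=
    squeeze_zero (fun i => div_nonneg (exp_pos _).le (hpos i).le)
      (fun i => exp_neg_mul_sq_div_le_one_div hε (hpos i).le)
      (tendsto_one_div_atTop_nhds_zero_nat.comp
        ((tendsto_add_atTop_nat N).congr fun i => Nat.add_comm i N))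
  have hz : ∀ n, ‖∑ i ∈ range n, z i‖ ≤ 1 / sin (π * s) := fun n => by
    have := abs_sum_Ico_sin_two_mul_le hsin.ne' N (N + n)
    rw [sum_Ico_eq_sum_range, Nat.add_sub_cancel_left, abs_of_pos hsin] at this
    have hz_eq : ∀ i, z i = sin (2 * (π * s) * ((N + i : ℕ) : ℝ)) := fun i => by
      simp only [z]; congr 1; ring
    simpa only [Real.norm_eq_abs, hz_eq] using this
  obtain ⟨T, hT, hTle⟩ := hf.exists_tendsto_sum_range_smul_norm_le hf_lim hz
  refine ⟨T, (hT.comp (tendsto_sub_atTop_nat N)).congr fun M => ?_, ?_⟩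
  · rw [Function.comp_apply, sum_Ico_eq_sum_range]
    refine sum_congr rfl fun i _ => ?_
    simp only [f, z, smul_eq_mul]
    ring
  · calc |T| ≤ f 0 * (1 / sin (π * s)) := hTle
      _ ≤ 1 / N * (1 / sin (π * s)) := by
        gcongr
        simpa [f] using exp_neg_mul_sq_div_le_one_div hε (hpos 0).le
      _ = 1 / (N * sin (π * s)) := one_div_mul_one_div _ _
end

section
/- There is a uniform bound on the regularized sums: for every s \in \mathbb{R} and every \varepsilon \in [0, 1], one has |g_\varepsilon(s)| \leq \frac{2\pi}{1 - e^{-\pi^2}} (where g_0 denotes the unregularized sum). -/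
open Filter Topology Real Finset

/-! For `x = 2πs ∈ (0, π]` split the sum at `P = ⌊2/x⌋`. On the first `P` terms use
`|sin((j+1)x)| ≤ (j+1)x`, so the head is at most `Px ≤ 2`. On the tail sum by parts: the
sine sums `∑_{j<k} sin((j+1)x)` are bounded by `1/sin(x/2) ≤ π/x`, and the weights
`e^{-ε(j+1)²}/(j+1)` decrease, so the tail is at most `2π/((P+1)x) < π`. Periodicity and
oddness in `x` reduce every `s` to this case, and `2 + π ≤ 2π ≤ 2π/(1 - e^{-π²})`. -/

lemma abs_sum_Ico_mul_le_of_antitone {a c : ℕ → ℝ} {M : ℝ}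
    (ha : ∀ k, |∑ j ∈ range k, a j| ≤ M) (hc : Antitone c) (hc0 : ∀ j, 0 ≤ c j)
    {P N : ℕ} (hPN : P ≤ N) :
    |∑ j ∈ Ico P N, a j * c j| ≤ 2 * M * c P := by
  set A : ℕ → ℝ := fun k => ∑ j ∈ range k, a j
  have hAc : ∀ k, |A k * c k| ≤ M * c k := fun k => by
    rw [abs_mul, abs_of_nonneg (hc0 k)]
    exact mul_le_mul_of_nonneg_right (ha k) (hc0 k)
  -- Summation by parts, with the boundary terms kept inside the estimate.
  have parts : |∑ j ∈ Ico P N, a j * c j - A N * c N + A P * c P| ≤ M * (c P - c N) := by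
    induction N, hPN using Nat.le_induction with
    | base => simp
    | succ N hPN ih =>
      have hstep : |A (N + 1) * (c N - c (N + 1))| ≤ M * (c N - c (N + 1)) := by
        have hdc : 0 ≤ c N - c (N + 1) := sub_nonneg.2 (hc N.le_succ)
        rw [abs_mul, abs_of_nonneg hdc]
        exact mul_le_mul_of_nonneg_right (ha _) hdc
      have hA : A (N + 1) = A N + a N := sum_range_succ _ _
      rw [sum_Ico_succ_top hPN]
      calc _ = |(∑ j ∈ Ico P N, a j * c j - A N * c N + A P * c P)
              + A (N + 1) * (c N - c (N + 1))| := by rw [hA]; ring_nf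
        _ ≤ M * (c P - c N) + M * (c N - c (N + 1)) := (abs_add_le _ _).trans (add_le_add ih hstep)
        _ = M * (c P - c (N + 1)) := by ring
  calc |∑ j ∈ Ico P N, a j * c j|
      = |(∑ j ∈ Ico P N, a j * c j - A N * c N + A P * c P) + A N * c N - A P * c P| := by ring_nf
    _ ≤ M * (c P - c N) + M * c N + M * c P :=
        (abs_sub _ _).trans (add_le_add ((abs_add_le _ _).trans (add_le_add parts (hAc N))) (hAc P))
    _ = 2 * M * c P := by ring

lemma two_mul_sin_half_mul_sum_sin (x : ℝ) (k : ℕ) :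
    2 * sin (x / 2) * ∑ j ∈ range k, sin ((j + 1) * x) =
      cos (x / 2) - cos ((2 * k + 1) * x / 2) := by
  induction k with
  | zero => simp
  | succ k ih =>
    rw [sum_range_succ, mul_add, ih, mul_comm (2 * sin (x / 2)), ← mul_assoc, mul_comm _ 2,
      two_mul_sin_mul_sin, show ((k : ℝ) + 1) * x - x / 2 = (2 * k + 1) * x / 2 by ring,
      show ((k : ℝ) + 1) * x + x / 2 = (2 * ↑(k + 1) + 1) * x / 2 by push_cast; ring]
    ring

lemma abs_sum_sin_le_pi_div {x : ℝ} (hx0 : 0 < x) (hxπ : x ≤ π) (k : ℕ) :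
    |∑ j ∈ range k, sin ((j + 1) * x)| ≤ π / x := by
  have hsin : x / π ≤ sin (x / 2) := by
    have hJordan := mul_le_sin (x := x / 2) (by positivity) (by linarith)
    have hx : 2 / π * (x / 2) = x / π := by field_simp
    linarith
  have hsin0 : 0 < sin (x / 2) := (div_pos hx0 pi_pos).trans_le hsin
  have hcos : |cos (x / 2) - cos ((2 * k + 1) * x / 2)| ≤ 2 := by
    rw [abs_le]
    constructor <;> linarith [neg_one_le_cos (x / 2), cos_le_one (x / 2),
      neg_one_le_cos ((2 * k + 1) * x / 2), cos_le_one ((2 * k + 1) * x / 2)]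
  rw [← two_mul_sin_half_mul_sum_sin, abs_mul, abs_of_pos (mul_pos two_pos hsin0)]
    at hcos
  rw [le_div_iff₀ hx0]
  calc |∑ j ∈ range k, sin ((j + 1) * x)| * x
      ≤ |∑ j ∈ range k, sin ((j + 1) * x)| * (π * sin (x / 2)) := by
        refine mul_le_mul_of_nonneg_left ?_ (abs_nonneg _)
        rwa [div_le_iff₀' pi_pos] at hsin
    _ = π / 2 * (2 * sin (x / 2) * |∑ j ∈ range k, sin ((j + 1) * x)|) := by ring
    _ ≤ π / 2 * 2 := mul_le_mul_of_nonneg_left hcos (by positivity)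
    _ = π := by ring

section weights

variable {c : ℕ → ℝ}

lemma abs_sum_range_sin_mul_le (hc0 : ∀ j, 0 ≤ c j) (hc1 : ∀ j : ℕ, ((j : ℝ) + 1) * c j ≤ 1)
    {x : ℝ} (hx : 0 ≤ x) (m : ℕ) :
    |∑ j ∈ range m, sin ((j + 1) * x) * c j| ≤ m * x := by
  calc |∑ j ∈ range m, sin ((j + 1) * x) * c j|
      ≤ ∑ j ∈ range m, |sin ((j + 1) * x) * c j| := abs_sum_le_sum_abs _ _
    _ ≤ ∑ j ∈ range m, x := by
        refine sum_le_sum fun j _ => ?_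
        rw [abs_mul, abs_of_nonneg (hc0 j)]
        calc |sin ((j + 1) * x)| * c j ≤ ((j + 1) * x) * c j := by
              refine mul_le_mul_of_nonneg_right ?_ (hc0 j)
              exact abs_sin_le_abs.trans (abs_of_nonneg (by positivity)).le
          _ = x * ((j + 1) * c j) := by ring
          _ ≤ x * 1 := by gcongr; exact hc1 j
          _ = x := mul_one x
    _ = m * x := by rw [sum_const, card_range, nsmul_eq_mul]

variable (hc : Antitone c) (hc0 : ∀ j, 0 ≤ c j) (hc1 : ∀ j : ℕ, ((j : ℝ) + 1) * c j ≤ 1)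
include hc hc0 hc1

lemma abs_sum_sin_mul_le_of_nonneg_of_le_pi {x : ℝ} (hx0 : 0 ≤ x) (hxπ : x ≤ π) (N : ℕ) :
    |∑ j ∈ range N, sin ((j + 1) * x) * c j| ≤ 2 + π := by
  rcases hx0.eq_or_lt with rfl | hx0
  · simpa using add_nonneg zero_le_two pi_pos.le
  set P := ⌊2 / x⌋₊
  have hPx : P * x ≤ 2 := (le_div_iff₀ hx0).1 (Nat.floor_le (by positivity))
  have hP1x : 2 < (P + 1) * x := (div_lt_iff₀ hx0).1 (Nat.lt_floor_add_one _)
  have head : ∀ m ≤ P, |∑ j ∈ range m, sin ((j + 1) * x) * c j| ≤ 2 := fun m hm =>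
    (abs_sum_range_sin_mul_le hc0 hc1 hx0.le m).trans ((by gcongr : (m : ℝ) * x ≤ P * x).trans hPx)
  rcases le_or_gt N P with hNP | hPN
  · linarith [head N hNP, pi_pos]
  have tail : |∑ j ∈ Ico P N, sin ((j + 1) * x) * c j| ≤ π := by
    have hcP : c P * ((P + 1) * x) ≤ x := by nlinarith [hc1 P]
    calc _ ≤ 2 * (π / x) * c P :=
          abs_sum_Ico_mul_le_of_antitone (abs_sum_sin_le_pi_div hx0 hxπ) hc hc0 hPN.le
      _ = π * (2 * c P) / x := by ring
      _ ≤ π * ((P + 1) * x * c P) / x := by gcongr; nlinarith [hc0 P]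
      _ ≤ π * x / x := by gcongr; linarith
      _ = π := by field_simp
  rw [← sum_range_add_sum_Ico _ hPN.le]
  linarith [abs_add_le (∑ j ∈ range P, sin ((j + 1) * x) * c j)
    (∑ j ∈ Ico P N, sin ((j + 1) * x) * c j), head P le_rfl]

lemma abs_sum_sin_mul_le_of_abs_le_pi {x : ℝ} (hx : |x| ≤ π) (N : ℕ) :
    |∑ j ∈ range N, sin ((j + 1) * x) * c j| ≤ 2 + π := by
  rcases le_total 0 x with hx0 | hx0
  · exact abs_sum_sin_mul_le_of_nonneg_of_le_pi hc hc0 hc1 hx0 ((le_abs_self x).trans hx) N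
  · have h := abs_sum_sin_mul_le_of_nonneg_of_le_pi hc hc0 hc1 (neg_nonneg.2 hx0)
      ((neg_le_abs x).trans hx) N
    simpa only [mul_neg, sin_neg, neg_mul, sum_neg_distrib, abs_neg] using h

lemma abs_sum_sin_two_pi_mul_le (s : ℝ) (N : ℕ) :
    |∑ j ∈ range N, sin ((j + 1) * (2 * π * s)) * c j| ≤ 2 + π := by
  have hr : |2 * π * (s - round s)| ≤ π := by
    rw [abs_mul, abs_of_pos two_pi_pos]
    nlinarith [abs_sub_round s, pi_pos]
  have hper : ∀ j : ℕ, sin ((j + 1) * (2 * π * s)) = sin ((j + 1) * (2 * π * (s - round s))) :=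
    fun j => by
      rw [← sin_add_int_mul_two_pi ((j + 1) * (2 * π * (s - round s))) ((j + 1) * round s)]
      push_cast
      ring_nf
  simp only [hper]
  exact abs_sum_sin_mul_le_of_abs_le_pi hc hc0 hc1 hr N

end weights

lemma antitone_exp_neg_mul_sq_div {ε : ℝ} (hε : 0 ≤ ε) :
    Antitone fun j : ℕ => exp (-ε * ((j : ℝ) + 1) ^ 2) / ((j : ℝ) + 1) := by
  refine antitone_nat_of_succ_le fun j => ?_
  push_cast
  refine div_le_div₀ (exp_pos _).le (exp_le_exp.2 ?_) (by positivity) (by linarith)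
  nlinarith [mul_nonneg hε (Nat.cast_nonneg (α := ℝ) j)]

theorem uniform_bound_general (s ε : ℝ) (hε0 : 0 ≤ ε) (G : ℝ)
    (hG : Filter.Tendsto
      (fun N : ℕ => ∑ p ∈ Finset.range N,
        Real.sin (2 * Real.pi * ((p : ℝ) + 1) * s) / ((p : ℝ) + 1)
          * Real.exp (-ε * ((p : ℝ) + 1) ^ 2))
      Filter.atTop (𝓝 G)) :
    |G| ≤ 2 * Real.pi / (1 - Real.exp (-Real.pi ^ 2)) := by
  set c : ℕ → ℝ := fun j => exp (-ε * ((j : ℝ) + 1) ^ 2) / ((j : ℝ) + 1)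
  have hc0 : ∀ j, 0 ≤ c j := fun j => by positivity
  have hc1 : ∀ j : ℕ, ((j : ℝ) + 1) * c j ≤ 1 := fun j => by
    rw [mul_div_cancel₀ _ (by positivity)]
    exact exp_le_one_iff.2 (by nlinarith [sq_nonneg ((j : ℝ) + 1)])
  have hterm : ∀ p : ℕ, sin (2 * π * ((p : ℝ) + 1) * s) / ((p : ℝ) + 1)
      * exp (-ε * ((p : ℝ) + 1) ^ 2) = sin ((p + 1) * (2 * π * s)) * c p := fun p => by
    simp only [c]; ring_nf
  have hG2 : |G| ≤ 2 + π := le_of_tendsto' hG.abs fun N => by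
    simpa only [hterm] using
      abs_sum_sin_two_pi_mul_le (antitone_exp_neg_mul_sq_div hε0) hc0 hc1 s N
  calc |G| ≤ 2 * π := by linarith [pi_gt_three]
    _ ≤ 2 * π / (1 - exp (-π ^ 2)) :=
      le_div_self two_pi_pos.le (sub_pos.2 (exp_lt_one_iff.2 (by nlinarith [pi_pos])))
        (sub_le_self _ (exp_pos _).le)

/-- Uniform bound on the regularized sums: for every `s ∈ ℝ` and `ε ∈ [0,1]`, if the
series `∑_{p≥1} sin(2πps)/p · e^{-εp²}` converges (in the sense of partial sums) to `G`,
then `|G| ≤ 2π/(1 - e^{-π²})`.  (For `ε = 0` this is the unregularized sum.) -/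
theorem uniform_bound (s ε : ℝ) (hε0 : 0 ≤ ε) (hε1 : ε ≤ 1) (G : ℝ)
    (hG : Filter.Tendsto
      (fun N : ℕ => ∑ p ∈ Finset.range N,
        Real.sin (2 * Real.pi * ((p : ℝ) + 1) * s) / ((p : ℝ) + 1)
          * Real.exp (-ε * ((p : ℝ) + 1) ^ 2))
      Filter.atTop (𝓝 G)) :
    |G| ≤ 2 * Real.pi / (1 - Real.exp (-Real.pi ^ 2)) :=
  uniform_bound_general s ε hε0 G hG
end

section
/- Let f : [0, \infty) \to \mathbb{R} be continuous and bounded, let \varphi : \mathbb{R} \to \mathbb{R} be a Schwartz function, let \gamma \in \mathbb{R}, \lambda > 0, \eta > 0 and \delta \in [0, \eta]. Then \sum_{n \in \mathbb{Z}} \int_{\mathbb{R}^2} \frac{f\big(\sqrt{|x|^2 + n^2 + \delta^2}\big)}{\sqrt{|x|^2 + n^2 + \delta^2}} \,(|x|^2 + n^2 + \eta^2)^{\gamma/2}\, \varphi\big(\lambda \sqrt{|x|^2 + n^2 + \eta^2}\big)\, d^2x = 4\pi \int_0^{\infty} \left(s^2 + \frac{s\, g(s)}{\pi}\right) \frac{f\big(\sqrt{s^2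 + \delta^2}\big)}{\sqrt{s^2 + \delta^2}} \,(s^2 + \eta^2)^{\gamma/2}\, \varphi\big(\lambda \sqrt{s^2 + \eta^2}\big)\, ds. -/
/-!
The summand of index `n` depends on `x` only through `r = ‖x‖`, and the substitution
`s = √(r² + n²)` turns it into `2π ∫_{|n|}^∞ s F(s) ds`, where `F` is the radial profile on the
right-hand side. Summing over `n` and exchanging sum and integral (legitimate because the Schwartz
decay of `φ` makes `s F(s)` and `s² F(s)` integrable) weights `s F(s)` by the number of integers
with `|n| < s`, which is `2⌈s⌉ - 1`; off the integers this is `2s + 2g(s)/π`.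
-/

open Filter Topology Real MeasureTheory Classical

noncomputable def g (s : ℝ) : ℝ :=
  if ∃ n : ℤ, (n : ℝ) = s then 0 else Real.pi * (1 / 2 - Int.fract s)

open Set

theorem tsum_indicator_Ioi_abs_intCast {α : Type*} [AddCommMonoid α] [TopologicalSpace α]
    (u : ℝ → α) (s : ℝ) :
    ∑' n : ℤ, (Ioi |(n : ℝ)|).indicator u s = (2 * ⌈s⌉ - 1).toNat • u s := by
  have hmem : ∀ n : ℤ, s ∈ Ioi |(n : ℝ)| ↔ n ∈ Finset.Ioo (-⌈s⌉) ⌈s⌉ := fun n => by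
    rw [mem_Ioi, abs_lt, Finset.mem_Ioo, neg_lt, ← Int.cast_neg, ← Int.lt_ceil, ← Int.lt_ceil,
      neg_lt]
  rw [tsum_eq_sum (s := Finset.Ioo (-⌈s⌉) ⌈s⌉)
      fun n hn => indicator_of_notMem (mt (hmem n).1 hn) u,
    Finset.sum_congr rfl fun n hn => indicator_of_mem ((hmem n).2 hn) u,
    Finset.sum_const, Int.card_Ioo, sub_neg_eq_add, ← two_mul]

theorem two_mul_ceil_sub_one_eq {s : ℝ} (hs : ¬∃ n : ℤ, (n : ℝ) = s) :
    2 * (⌈s⌉ : ℝ) - 1 = 2 * (s + g s / π) := by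
  rw [Int.ceil_eq_add_one_sub_fract (Int.fract_ne_zero_iff.2 hs), g, if_neg hs]
  field_simp
  ring

theorem tsum_setIntegral_Ioi_abs_intCast {h : ℝ → ℝ} (hh : IntegrableOn h (Ioi 0))
    (hsh : IntegrableOn (fun s => s * h s) (Ioi 0)) :
    ∑' n : ℤ, ∫ s in Ioi |(n : ℝ)|, h s = ∫ s in Ioi 0, (2 * ⌈s⌉ - 1) * h s := by
  have hcount : ∀ s ∈ Ioi (0 : ℝ), ((2 * ⌈s⌉ - 1).toNat : ℝ) = 2 * ⌈s⌉ - 1 := fun s hs => by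
    have : 0 < ⌈s⌉ := Int.ceil_pos.2 hs
    rw [← Int.cast_natCast, Int.toNat_of_nonneg (by omega)]
    push_cast
    ring
  have hmeas : ∀ n : ℤ, AEStronglyMeasurable ((Ioi |(n : ℝ)|).indicator h)
      (volume.restrict (Ioi 0)) :=
    fun n => hh.aestronglyMeasurable.indicator measurableSet_Ioi
  have hfin : ∑' n : ℤ, ∫⁻ s in Ioi 0, ‖(Ioi |(n : ℝ)|).indicator h s‖ₑ ≠ ⊤ := by
    rw [← lintegral_tsum fun n => (hmeas n).enorm]
    simp_rw [enorm_indicator_eq_indicator_enorm, tsum_indicator_Ioi_abs_intCast]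
    refine ne_top_of_le_ne_top ((hsh.const_mul 2).add hh).hasFiniteIntegral.ne ?_
    refine setLIntegral_mono' measurableSet_Ioi fun s hs => ?_
    have h2s : (0 : ℝ) ≤ 2 * s + 1 := by linarith [mem_Ioi.1 hs]
    rw [nsmul_eq_mul, Pi.add_apply, show 2 * (s * h s) + h s = (2 * s + 1) * h s by ring, enorm_mul,
      Real.enorm_of_nonneg h2s, ← ENNReal.ofReal_natCast, hcount s hs]
    gcongr
    linarith [Int.ceil_lt_add_one s]
  have hrestrict : ∀ n : ℤ,
      ∫ s in Ioi |(n : ℝ)|, h s = ∫ s in Ioi 0, (Ioi |(n : ℝ)|).indicator h s := fun n => by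
    rw [setIntegral_indicator measurableSet_Ioi, Ioi_inter_Ioi, max_eq_right (abs_nonneg _)]
  simp_rw [hrestrict]
  rw [← integral_tsum hmeas hfin]
  refine setIntegral_congr_fun measurableSet_Ioi fun s hs => ?_
  rw [tsum_indicator_Ioi_abs_intCast, nsmul_eq_mul, hcount s hs]

section
variable {E : Type*} [NormedAddCommGroup E] [NormedSpace ℝ E]

theorem integral_fun_norm_euclideanSpace_two (G : ℝ → E) :
    ∫ x : EuclideanSpace ℝ (Fin 2), G ‖x‖ = (2 * π) • ∫ r in Ioi 0, r • G r := by
  have hball : volume.real (Metric.ball (0 : EuclideanSpace ℝ (Fin 2)) 1) = π := by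
    rw [measureReal_def, EuclideanSpace.volume_ball]
    norm_num [Real.Gamma_two, Real.sq_sqrt Real.pi_pos.le, ENNReal.toReal_ofReal Real.pi_pos.le]
  rw [integral_fun_norm_addHaar volume G, hball, finrank_euclideanSpace_fin,
    ← Nat.cast_smul_eq_nsmul ℝ, smul_smul]
  norm_num

theorem image_sqrt_sq_add_sq_Ioi {c : ℝ} (hc : 0 ≤ c) :
    (fun r => √(r ^ 2 + c ^ 2)) '' Ioi 0 = Ioi c := by
  ext s
  constructor
  · rintro ⟨r, hr, rfl⟩
    rw [mem_Ioi, lt_sqrt hc]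
    nlinarith [mem_Ioi.1 hr]
  · intro hs
    have hcs : 0 < s ^ 2 - c ^ 2 := by nlinarith [mem_Ioi.1 hs]
    refine ⟨√(s ^ 2 - c ^ 2), sqrt_pos.2 hcs, ?_⟩
    show √(√(s ^ 2 - c ^ 2) ^ 2 + c ^ 2) = s
    rw [sq_sqrt hcs.le, sub_add_cancel, sqrt_sq (hc.trans (mem_Ioi.1 hs).le)]

theorem integral_Ioi_smul_comp_sqrt_sq_add_sq {c : ℝ} (hc : 0 ≤ c) (F : ℝ → E) :
    ∫ r in Ioi 0, r • F √(r ^ 2 + c ^ 2) = ∫ s in Ioi c, s • F s := by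
  have hpos : ∀ r ∈ Ioi (0 : ℝ), 0 < r ^ 2 + c ^ 2 := fun r hr =>
    add_pos_of_pos_of_nonneg (pow_pos hr 2) (sq_nonneg c)
  have hderiv : ∀ r ∈ Ioi (0 : ℝ), HasDerivWithinAt (fun r => √(r ^ 2 + c ^ 2))
      (r / √(r ^ 2 + c ^ 2)) (Ioi 0) r := fun r hr => by
    have := ((hasDerivAt_pow 2 r).add_const (c ^ 2)).sqrt (hpos r hr).ne'
    refine this.hasDerivWithinAt.congr_deriv ?_
    field_simp
    norm_num
  have hinj : InjOn (fun r => √(r ^ 2 + c ^ 2)) (Ioi 0) := fun a ha b hb hab => by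
    have := congrArg (· ^ 2) hab
    simp only [sq_sqrt (hpos a ha).le, sq_sqrt (hpos b hb).le] at this
    nlinarith [mem_Ioi.1 ha, mem_Ioi.1 hb]
  rw [← image_sqrt_sq_add_sq_Ioi hc,
    integral_image_eq_integral_abs_deriv_smul measurableSet_Ioi hderiv hinj]
  refine setIntegral_congr_fun measurableSet_Ioi fun r hr => ?_
  have hsqrt := sqrt_pos.2 (hpos r hr)
  rw [abs_of_pos (div_pos hr hsqrt), smul_smul, div_mul_cancel₀ _ hsqrt.ne']

theorem integral_comp_sqrt_norm_sq_add_sq (F : ℝ → E) (c : ℝ) :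
    ∫ x : EuclideanSpace ℝ (Fin 2), F √(‖x‖ ^ 2 + c ^ 2) = (2 * π) • ∫ s in Ioi |c|, s • F s := by
  rw [integral_fun_norm_euclideanSpace_two fun r => F √(r ^ 2 + c ^ 2), ← sq_abs c,
    integral_Ioi_smul_comp_sqrt_sq_add_sq (abs_nonneg c)]

end

theorem exists_rpow_mul_abs_le_div_pow (φ : SchwartzMap ℝ ℝ) (γ : ℝ) {lam η : ℝ} (hlam : 0 < lam)
    (hη : 0 < η) (N : ℕ) : ∃ C, ∀ t, η ≤ t → t ^ γ * |φ (lam * t)| ≤ C / t ^ N := by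
  set k := ⌈γ⌉₊
  refine ⟨η ^ (γ - k) / lam ^ (k + N) * SchwartzMap.seminorm ℝ (k + N) 0 φ, fun t ht => ?_⟩
  have ht0 : 0 < t := hη.trans_le ht
  have hφ := SchwartzMap.norm_pow_mul_le_seminorm ℝ φ (k + N) (lam * t)
  rw [Real.norm_eq_abs, Real.norm_eq_abs, abs_of_pos (by positivity)] at hφ
  have hrpow : t ^ γ ≤ η ^ (γ - k) * t ^ k := calc
    t ^ γ = t ^ (γ - k) * t ^ (k : ℝ) := by rw [← rpow_add ht0, sub_add_cancel]
    _ ≤ η ^ (γ - k) * t ^ k := by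
      rw [rpow_natCast]
      exact mul_le_mul_of_nonneg_right
        (rpow_le_rpow_of_nonpos hη ht (by linarith [Nat.le_ceil γ])) (by positivity)
  rw [le_div_iff₀ (by positivity)]
  calc t ^ γ * |φ (lam * t)| * t ^ N ≤ η ^ (γ - k) * t ^ k * |φ (lam * t)| * t ^ N := by gcongr
    _ = η ^ (γ - k) / lam ^ (k + N) * ((lam * t) ^ (k + N) * |φ (lam * t)|) := by
      field_simp
      ring
    _ ≤ _ := by gcongr

theorem integrable_inv_sq_add_sq {η : ℝ} (hη : η ≠ 0) :
    Integrable fun s : ℝ => (s ^ 2 + η ^ 2)⁻¹ := by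
  refine ((integrable_inv_one_add_sq.comp_div hη).const_mul (η ^ 2)⁻¹).congr
    (ae_of_all _ fun s => ?_)
  field_simp
  ring

theorem integrableOn_pow_succ_mul_mul_rpow_mul_schwartz {u : ℝ → ℝ} {M : ℝ}
    (hu : AEStronglyMeasurable u (volume.restrict (Ioi 0))) (hM : ∀ s > 0, |s * u s| ≤ M)
    (φ : SchwartzMap ℝ ℝ) (γ : ℝ) {lam η : ℝ} (hlam : 0 < lam) (hη : 0 < η) (j : ℕ) :
    IntegrableOn (fun s => s ^ (j + 1) * (u s * (s ^ 2 + η ^ 2) ^ (γ / 2)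
      * φ (lam * √(s ^ 2 + η ^ 2)))) (Ioi 0) := by
  obtain ⟨C, hC⟩ := exists_rpow_mul_abs_le_div_pow φ γ hlam hη (j + 2)
  have hM0 : 0 ≤ M := (abs_nonneg _).trans (hM 1 one_pos)
  have hmeas : AEStronglyMeasurable (fun s => s ^ (j + 1) * (u s * (s ^ 2 + η ^ 2) ^ (γ / 2)
      * φ (lam * √(s ^ 2 + η ^ 2)))) (volume.restrict (Ioi 0)) := by
    have hrpowc : Continuous fun s : ℝ => (s ^ 2 + η ^ 2) ^ (γ / 2) :=
      (by fun_prop : Continuous fun s : ℝ => s ^ 2 + η ^ 2).rpow_const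
        fun s => Or.inl (by positivity)
    have hφc : Continuous fun s => φ (lam * √(s ^ 2 + η ^ 2)) := by fun_prop
    exact (continuous_pow _).aestronglyMeasurable.mul
      ((hu.mul hrpowc.aestronglyMeasurable).mul hφc.aestronglyMeasurable)
  refine Integrable.mono' ((integrable_inv_sq_add_sq hη.ne').const_mul (M * C)).integrableOn
    hmeas ?_
  filter_upwards [ae_restrict_mem measurableSet_Ioi] with s hs
  have hs0 : 0 < s := hs
  set t := √(s ^ 2 + η ^ 2) with ht_def
  have hst : s ≤ t := (le_sqrt hs0.le (by positivity)).2 (by nlinarith)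
  have hηt : η ≤ t := (le_sqrt hη.le (by positivity)).2 (by nlinarith)
  have hrpow : (s ^ 2 + η ^ 2) ^ (γ / 2) = t ^ γ := by
    rw [ht_def, sqrt_eq_rpow, ← rpow_mul (by positivity)]
    ring_nf
  rw [Real.norm_eq_abs, hrpow]
  calc |s ^ (j + 1) * (u s * t ^ γ * φ (lam * t))|
      = s ^ j * |s * u s| * (t ^ γ * |φ (lam * t)|) := by
        rw [abs_mul, abs_mul, abs_mul, abs_mul, abs_pow, abs_of_pos hs0,
          abs_of_nonneg (rpow_nonneg (hs0.le.trans hst) _)]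
        ring
    _ ≤ t ^ j * M * (C / t ^ (j + 2)) := by
        gcongr
        · exact hM s hs0
        · exact hC t hηt
    _ = M * C * (s ^ 2 + η ^ 2)⁻¹ := by
        have ht0 : 0 < t := hs0.trans_le hst
        rw [← sq_sqrt (by positivity : 0 ≤ s ^ 2 + η ^ 2), ← ht_def]
        field_simp
        ring

theorem abs_mul_comp_sqrt_div_sqrt_le {f : ℝ → ℝ} {M : ℝ} (hM : ∀ s, 0 ≤ s → |f s| ≤ M)
    (δ : ℝ) {s : ℝ} (hs : 0 < s) : |s * (f √(s ^ 2 + δ ^ 2) / √(s ^ 2 + δ ^ 2))| ≤ M := by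
  have hsδ : s ≤ √(s ^ 2 + δ ^ 2) := (le_sqrt hs.le (by positivity)).2 (by nlinarith)
  rw [mul_div_left_comm, abs_mul, abs_div, abs_of_pos hs, abs_of_pos (hs.trans_le hsδ)]
  exact mul_le_of_le_one_right (abs_nonneg _) ((div_le_one (hs.trans_le hsδ)).2 hsδ)
    |>.trans (hM _ (sqrt_nonneg _))

theorem sum_integral_eq_radial_integral_general (f : ℝ → ℝ)
    (hf : ContinuousOn f (Set.Ici (0 : ℝ)))
    (hbd : ∃ M : ℝ, ∀ s : ℝ, 0 ≤ s → |f s| ≤ M)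
    (φ : SchwartzMap ℝ ℝ) (γ lam η δ : ℝ) (hlam : 0 < lam) (hη : 0 < η) :
    (∑' n : ℤ, ∫ x : EuclideanSpace ℝ (Fin 2),
        f (Real.sqrt (‖x‖ ^ 2 + (n : ℝ) ^ 2 + δ ^ 2))
            / Real.sqrt (‖x‖ ^ 2 + (n : ℝ) ^ 2 + δ ^ 2)
          * (‖x‖ ^ 2 + (n : ℝ) ^ 2 + η ^ 2) ^ (γ / 2)
          * φ (lam * Real.sqrt (‖x‖ ^ 2 + (n : ℝ) ^ 2 + η ^ 2)))
      = 4 * Real.pi * ∫ s in Set.Ioi (0 : ℝ),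
          (s ^ 2 + s * g s / Real.pi)
            * (f (Real.sqrt (s ^ 2 + δ ^ 2)) / Real.sqrt (s ^ 2 + δ ^ 2))
            * (s ^ 2 + η ^ 2) ^ (γ / 2)
            * φ (lam * Real.sqrt (s ^ 2 + η ^ 2)) := by
  obtain ⟨M, hM⟩ := hbd
  set F : ℝ → ℝ := fun s => f √(s ^ 2 + δ ^ 2) / √(s ^ 2 + δ ^ 2)
    * (s ^ 2 + η ^ 2) ^ (γ / 2) * φ (lam * √(s ^ 2 + η ^ 2))
  have hfδ : Continuous fun s => f √(s ^ 2 + δ ^ 2) :=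
    hf.comp_continuous (by fun_prop) fun s => sqrt_nonneg _
  have hint : ∀ j : ℕ, IntegrableOn (fun s => s ^ (j + 1) * F s) (Ioi 0) :=
    integrableOn_pow_succ_mul_mul_rpow_mul_schwartz
      (hfδ.measurable.div (by fun_prop)).aestronglyMeasurable
      (fun s hs => abs_mul_comp_sqrt_div_sqrt_le hM δ hs) φ γ hlam hη
  have hterm : ∀ n : ℤ, ∫ x : EuclideanSpace ℝ (Fin 2),
      f √(‖x‖ ^ 2 + (n : ℝ) ^ 2 + δ ^ 2) / √(‖x‖ ^ 2 + (n : ℝ) ^ 2 + δ ^ 2)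
        * (‖x‖ ^ 2 + (n : ℝ) ^ 2 + η ^ 2) ^ (γ / 2)
        * φ (lam * √(‖x‖ ^ 2 + (n : ℝ) ^ 2 + η ^ 2))
      = 2 * π * ∫ s in Ioi |(n : ℝ)|, s * F s := fun n => by
    trans ∫ x : EuclideanSpace ℝ (Fin 2), F √(‖x‖ ^ 2 + (n : ℝ) ^ 2)
    · congr with x
      simp only [F, sq_sqrt (by positivity : 0 ≤ ‖x‖ ^ 2 + (n : ℝ) ^ 2)]
    · simp only [integral_comp_sqrt_norm_sq_add_sq, smul_eq_mul]
  have hnonint : ∀ᵐ s ∂volume, ¬∃ n : ℤ, (n : ℝ) = s :=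
    (countable_range ((↑) : ℤ → ℝ)).ae_notMem volume
  rw [tsum_congr hterm, tsum_mul_left,
    tsum_setIntegral_Ioi_abs_intCast (by simpa using hint 0)
      (by simpa [pow_succ, mul_assoc] using hint 1),
    ← integral_const_mul, ← integral_const_mul]
  refine setIntegral_congr_ae measurableSet_Ioi (hnonint.mono fun s hs _ => ?_)
  rw [two_mul_ceil_sub_one_eq hs]
  ring

/-- Reduction of the regularized sum-integral over `ℝ² × ℤ` to a one-dimensional
radial integral involving the corrected density of states `s² + s g(s)/π`. -/
theorem sum_integral_eq_radial_integral (f : ℝ → ℝ)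
    (hf : ContinuousOn f (Set.Ici (0 : ℝ)))
    (hbd : ∃ M : ℝ, ∀ s : ℝ, 0 ≤ s → |f s| ≤ M)
    (φ : SchwartzMap ℝ ℝ) (γ lam η δ : ℝ) (hlam : 0 < lam) (hη : 0 < η)
    (hδ : δ ∈ Set.Icc 0 η) :
    (∑' n : ℤ, ∫ x : EuclideanSpace ℝ (Fin 2),
        f (Real.sqrt (‖x‖ ^ 2 + (n : ℝ) ^ 2 + δ ^ 2))
            / Real.sqrt (‖x‖ ^ 2 + (n : ℝ) ^ 2 + δ ^ 2)
          * (‖x‖ ^ 2 + (n : ℝ) ^ 2 + η ^ 2) ^ (γ / 2)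
          * φ (lam * Real.sqrt (‖x‖ ^ 2 + (n : ℝ) ^ 2 + η ^ 2)))
      = 4 * Real.pi * ∫ s in Set.Ioi (0 : ℝ),
          (s ^ 2 + s * g s / Real.pi)
            * (f (Real.sqrt (s ^ 2 + δ ^ 2)) / Real.sqrt (s ^ 2 + δ ^ 2))
            * (s ^ 2 + η ^ 2) ^ (γ / 2)
            * φ (lam * Real.sqrt (s ^ 2 + η ^ 2)) :=
  sum_integral_eq_radial_integral_general f hf hbd φ γ lam η δ hlam hη
end

section
/- Let \varphi : \mathbb{R} \to \mathbb{R} be a Schwartz function with \varphi(0) = 1. Then \lim_{\lambda \to 0^+} \int_0^{\infty} s^2\, g(s)\, \varphi(\lambda s)\, ds = -\frac{\pi}{360}. (Equivalently, the regularized Casimir energy between two perfectly conducting plates of area L^2 at separation d, E^{\varphi}_{\mathrm{Casimir}}(L, d) = \frac{\pi}{2}\frac{L^2}{d^3} \int_0^{\infty} s^2 g(s) \varphi(\lambda s)\, ds with \lambda = \kappa_d/\kappa_\varphi, tends to -\frac{\pi^2}{720}\frac{L^2}{d^3} as the cut-off ratio \lambda tends to 0.) -/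
open Filter Topology Real MeasureTheory Classical

/-!
Off the integers `g = -π P₁`, where `Pₖ x = Bₖ({x}) / k!` are the periodised Bernoulli
functions, normalised so that `Pₖ₊₁` is continuous (for `k ≥ 1`) with right derivative `Pₖ`.
Writing `s² φ(λs) = λ⁻² ψ(λs)` with `ψ u = u² φ u`, four integrations by parts on `(0, ∞)`
(Euler–Maclaurin) give
`∫₀^∞ P₁(s) ψ(λs) ds = -ψ(0)/12 + λ² ψ''(0)/720 + λ⁴ ∫₀^∞ P₅(s) ψ⁗(λs) ds`,
because `P₂(0) = 1/12`, `P₄(0) = -1/720` and `P₃(0) = P₅(0) = 0`. Since `ψ(0) = 0` and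
`ψ''(0) = 2φ(0)`, this makes `∫₀^∞ P₁(s) s² φ(λs) ds = φ(0)/360 + λ² ∫₀^∞ P₅(s) ψ⁗(λs) ds`,
and the last term is `O(λ)` because `P₅` is bounded and `ψ⁗` is integrable.
-/

open Set

noncomputable def periodicBernoulli (k : ℕ) (x : ℝ) : ℝ :=
  bernoulliFun k (Int.fract x) / k.factorial

theorem periodicBernoulli_apply_zero (k : ℕ) :
    periodicBernoulli k 0 = bernoulli k / k.factorial := by
  rw [periodicBernoulli, Int.fract_zero, bernoulliFun_eval_zero]

theorem periodicBernoulli_one_apply (x : ℝ) : periodicBernoulli 1 x = Int.fract x - 1 / 2 := by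
  simp [periodicBernoulli]

theorem continuous_periodicBernoulli {k : ℕ} (hk : k ≠ 1) : Continuous (periodicBernoulli k) :=
  ((continuous_bernoulliFun k).div_const _).continuousOn.comp_fract''
    (by rw [bernoulliFun_endpoints_eq_of_ne_one hk])

theorem measurable_periodicBernoulli (k : ℕ) : Measurable (periodicBernoulli k) :=
  ((continuous_bernoulliFun k).measurable.comp measurable_fract).div_const _

theorem exists_abs_periodicBernoulli_le (k : ℕ) : ∃ C, ∀ x, |periodicBernoulli k x| ≤ C := by
  obtain ⟨C, hC⟩ := isCompact_Icc.exists_bound_of_continuousOn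
    ((continuous_bernoulliFun k).div_const (k.factorial : ℝ)).continuousOn (s := Icc (0 : ℝ) 1)
  exact ⟨C, fun x => hC _ ⟨Int.fract_nonneg x, (Int.fract_lt_one x).le⟩⟩

theorem hasDerivWithinAt_fract_Ici (x : ℝ) : HasDerivWithinAt Int.fract 1 (Ici x) x := by
  refine ((hasDerivAt_id x).sub_const (⌊x⌋ : ℝ)).hasDerivWithinAt.congr_of_eventuallyEq ?_
    (Int.self_sub_floor x)
  filter_upwards [nhdsWithin_le_nhds (Iio_mem_nhds (Int.lt_floor_add_one x)),
    self_mem_nhdsWithin] with y hy₁ hy₂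
  rw [← Int.self_sub_floor, Int.floor_eq_iff.mpr ⟨(Int.floor_le x).trans hy₂, hy₁⟩, id]

theorem hasDerivWithinAt_periodicBernoulli_succ (k : ℕ) (x : ℝ) :
    HasDerivWithinAt (periodicBernoulli (k + 1)) (periodicBernoulli k x) (Ici x) x := by
  have hB := (antideriv_bernoulliFun k (Int.fract x)).div_const (k.factorial : ℝ)
  simp only [div_div, ← Nat.cast_add_one, ← Nat.cast_mul, ← Nat.factorial_succ] at hB
  have h := hB.comp_hasDerivWithinAt x (hasDerivWithinAt_fract_Ici x)
  rwa [mul_one] at h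

theorem integral_Ioi_of_hasDerivWithinAt_Ioi_of_tendsto {f f' : ℝ → ℝ} {a m : ℝ}
    (hcont : ContinuousOn f (Ici a)) (hderiv : ∀ x ∈ Ioi a, HasDerivWithinAt f (f' x) (Ioi x) x)
    (f'int : IntegrableOn f' (Ioi a)) (hf : Tendsto f atTop (𝓝 m)) :
    ∫ x in Ioi a, f' x = m - f a := by
  refine tendsto_nhds_unique (intervalIntegral_tendsto_integral_Ioi a f'int tendsto_id) ?_
  refine (hf.sub_const _).congr' ?_
  filter_upwards [Ioi_mem_atTop a] with x hx
  symm
  refine intervalIntegral.integral_eq_sub_of_hasDeriv_right_of_le hx.out.le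
    (hcont.mono Icc_subset_Ici_self) (fun y hy => hderiv y hy.1) ?_
  rw [id, intervalIntegrable_iff_integrableOn_Ioc_of_le hx.out.le]
  exact f'int.mono_set Ioc_subset_Ioi_self

theorem integral_Ioi_mul_eq_neg_sub_of_hasDerivWithinAt {P p f f' : ℝ → ℝ} {a C D : ℝ}
    (hP : Continuous P) (hPp : ∀ x, HasDerivWithinAt P (p x) (Ici x) x) (hPC : ∀ x, |P x| ≤ C)
    (hp : AEStronglyMeasurable p) (hpD : ∀ x, |p x| ≤ D)
    (hff' : ∀ x, HasDerivAt f (f' x) x) (hf : Integrable f) (hf' : Integrable f')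
    (hf_atTop : Tendsto f atTop (𝓝 0)) :
    ∫ x in Ioi a, p x * f x = -(P a * f a) - ∫ x in Ioi a, P x * f' x := by
  have hpf : Integrable (fun x => p x * f x) := hf.bdd_mul hp (.of_forall hpD)
  have hPf' : Integrable (fun x => P x * f' x) :=
    hf'.bdd_mul hP.aestronglyMeasurable (.of_forall hPC)
  have hPf_atTop : Tendsto (fun x => P x * f x) atTop (𝓝 0) :=
    isBoundedUnder_le_mul_tendsto_zero ⟨C, eventually_map.mpr (.of_forall hPC)⟩ hf_atTop
  have hf_cont : Continuous f := continuous_iff_continuousAt.2 fun x => (hff' x).continuousAt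
  have hFTC := integral_Ioi_of_hasDerivWithinAt_Ioi_of_tendsto (a := a)
    (hP.mul hf_cont).continuousOn
    (fun x _ => ((hPp x).mul (hff' x).hasDerivWithinAt).mono Ioi_subset_Ici_self)
    (hpf.add hPf').integrableOn hPf_atTop
  rw [integral_add hpf.integrableOn hPf'.integrableOn, Pi.mul_apply] at hFTC
  linarith

open SchwartzMap

local notation "𝒟" => SchwartzMap.derivCLM ℝ ℝ

namespace SchwartzMap

variable (ψ : 𝓢(ℝ, ℝ)) {c : ℝ}

theorem hasDerivAt_comp_mul (x : ℝ) :
    HasDerivAt (fun s => ψ (c * s)) (c * 𝒟 ψ (c * x)) x := by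
  have h := (ψ.hasDerivAt (c * x)).comp x ((hasDerivAt_id x).const_mul c)
  rw [mul_one, mul_comm] at h
  exact h

theorem integrable_comp_mul (hc : c ≠ 0) : Integrable (fun s => ψ (c * s)) :=
  ψ.integrable.comp_mul_left' hc

theorem tendsto_comp_mul_atTop (hc : 0 < c) : Tendsto (fun s => ψ (c * s)) atTop (𝓝 0) :=
  (ψ.tendsto_cocompact.mono_left atTop_le_cocompact).comp (tendsto_id.const_mul_atTop hc)

end SchwartzMap

theorem deriv_deriv_sq_mul_zero {f : ℝ → ℝ} (hf : Differentiable ℝ f)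
    (hf' : DifferentiableAt ℝ (deriv f) 0) :
    deriv (deriv fun u => u ^ 2 * f u) 0 = 2 * f 0 := by
  have hfirst : deriv (fun u => u ^ 2 * f u) = fun u => 2 * u * f u + u ^ 2 * deriv f u := by
    ext u
    exact (((hasDerivAt_pow 2 u).mul (hf u).hasDerivAt).congr_deriv (by simp)).deriv
  have hsecond : HasDerivAt (fun u => 2 * u * f u + u ^ 2 * deriv f u) (2 * f 0) 0 :=
    ((((hasDerivAt_id (0 : ℝ)).const_mul 2).mul (hf 0).hasDerivAt).add
      ((hasDerivAt_pow 2 (0 : ℝ)).mul hf'.hasDerivAt)).congr_deriv (by simp)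
  rw [hfirst, hsecond.deriv]

theorem abs_mul_integral_Ioi_mul_comp_mul_le {P ψ : ℝ → ℝ} {C c : ℝ} (hPC : ∀ x, |P x| ≤ C)
    (hψ : Integrable ψ) (hc : 0 < c) :
    |c * ∫ s in Ioi 0, P s * ψ (c * s)| ≤ C * ∫ u in Ioi 0, |ψ u| := by
  have hbound : |∫ s in Ioi 0, P s * ψ (c * s)| ≤ ∫ s in Ioi 0, C * |ψ (c * s)| := by
    rw [← Real.norm_eq_abs]
    refine norm_integral_le_of_norm_le
      ((hψ.comp_mul_left' hc.ne').abs.const_mul C).integrableOn (.of_forall fun s => ?_)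
    rw [Real.norm_eq_abs, abs_mul]
    exact mul_le_mul_of_nonneg_right (hPC s) (abs_nonneg _)
  rw [integral_const_mul, integral_comp_mul_left_Ioi (fun u => |ψ u|) 0 hc, mul_zero,
    smul_eq_mul] at hbound
  rw [abs_mul, abs_of_pos hc]
  calc c * |∫ s in Ioi 0, P s * ψ (c * s)|
      ≤ c * (C * (c⁻¹ * ∫ u in Ioi 0, |ψ u|)) := mul_le_mul_of_nonneg_left hbound hc.le
    _ = C * ∫ u in Ioi 0, |ψ u| := by field_simp

theorem tendsto_sq_mul_integral_Ioi_mul_comp_mul {P ψ : ℝ → ℝ} {C : ℝ} (hPC : ∀ x, |P x| ≤ C)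
    (hψ : Integrable ψ) :
    Tendsto (fun c => c ^ 2 * ∫ s in Ioi 0, P s * ψ (c * s)) (𝓝[>] 0) (𝓝 0) := by
  have hlin : Tendsto (fun c : ℝ => c * (C * ∫ u in Ioi 0, |ψ u|)) (𝓝[>] 0) (𝓝 0) := by
    simpa using ((continuous_mul_const (C * ∫ u in Ioi 0, |ψ u|)).tendsto 0).mono_left
      nhdsWithin_le_nhds
  refine squeeze_zero_norm' ?_ hlin
  filter_upwards [self_mem_nhdsWithin] with c (hc : 0 < c)
  rw [Real.norm_eq_abs, sq, mul_assoc, abs_mul, abs_of_pos hc]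
  exact mul_le_mul_of_nonneg_left (abs_mul_integral_Ioi_mul_comp_mul_le hPC hψ hc) hc.le

section HalfLine

variable (ψ : 𝓢(ℝ, ℝ)) {c : ℝ}

theorem integral_Ioi_periodicBernoulli_mul_comp_mul (k : ℕ) (hc : 0 < c) :
    ∫ s in Ioi 0, periodicBernoulli (k + 1) s * ψ (c * s) =
      -(periodicBernoulli (k + 2) 0 * ψ 0) -
        c * ∫ s in Ioi 0, periodicBernoulli (k + 2) s * 𝒟 ψ (c * s) := by
  obtain ⟨C, hC⟩ := exists_abs_periodicBernoulli_le (k + 2)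
  obtain ⟨D, hD⟩ := exists_abs_periodicBernoulli_le (k + 1)
  rw [integral_Ioi_mul_eq_neg_sub_of_hasDerivWithinAt (continuous_periodicBernoulli (by lia))
    (hasDerivWithinAt_periodicBernoulli_succ (k + 1)) hC
    (measurable_periodicBernoulli (k + 1)).aestronglyMeasurable hD
    ψ.hasDerivAt_comp_mul (ψ.integrable_comp_mul hc.ne')
    (((𝒟 ψ).integrable_comp_mul hc.ne').const_mul c) (ψ.tendsto_comp_mul_atTop hc)]
  simp only [mul_zero, mul_left_comm _ c, integral_const_mul]

theorem integral_Ioi_periodicBernoulli_one_mul_comp_mul (hc : 0 < c) :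
    ∫ s in Ioi 0, periodicBernoulli 1 s * ψ (c * s) =
      -ψ 0 / 12 + c ^ 2 * 𝒟 (𝒟 ψ) 0 / 720 +
        c ^ 4 * ∫ s in Ioi 0, periodicBernoulli 5 s * 𝒟 (𝒟 (𝒟 (𝒟 ψ))) (c * s) := by
  rw [integral_Ioi_periodicBernoulli_mul_comp_mul ψ 0 hc,
    integral_Ioi_periodicBernoulli_mul_comp_mul _ 1 hc,
    integral_Ioi_periodicBernoulli_mul_comp_mul _ 2 hc,
    integral_Ioi_periodicBernoulli_mul_comp_mul _ 3 hc]
  simp only [periodicBernoulli_apply_zero,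
    bernoulli_eq_zero_of_odd (by decide : Odd 3) (by lia),
    bernoulli_eq_zero_of_odd (by decide : Odd 5) (by lia),
    bernoulli_eq_bernoulli'_of_ne_one (by decide : 4 ≠ 1), bernoulli'_four]
  norm_num [Nat.factorial]
  ring

theorem integral_Ioi_periodicBernoulli_one_mul_sq_mul_comp_mul (φ : 𝓢(ℝ, ℝ)) (hc : 0 < c) :
    ∫ s in Ioi 0, periodicBernoulli 1 s * (s ^ 2 * φ (c * s)) =
      φ 0 / 360 + c ^ 2 * ∫ s in Ioi 0, periodicBernoulli 5 s *
        𝒟 (𝒟 (𝒟 (𝒟 (smulLeftCLM ℝ (fun u : ℝ => u ^ 2) φ)))) (c * s) := by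
  set ψ := smulLeftCLM ℝ (fun u : ℝ => u ^ 2) φ
  have hψ : ⇑ψ = fun u => u ^ 2 * φ u := by
    ext u
    simp [ψ, smulLeftCLM_apply_apply (by fun_prop : (fun u : ℝ => u ^ 2).HasTemperateGrowth)]
  have hψ₀ : ψ 0 = 0 := by simp [hψ]
  have hψ'' : 𝒟 (𝒟 ψ) 0 = 2 * φ 0 := by
    have hDψ : ⇑(𝒟 ψ) = deriv ψ := funext (derivCLM_apply ℝ ψ)
    rw [derivCLM_apply, hDψ, hψ,
      deriv_deriv_sq_mul_zero φ.differentiable (𝒟 φ).differentiableAt]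
  have hscale : ∀ s, periodicBernoulli 1 s * (s ^ 2 * φ (c * s)) =
      (c ^ 2)⁻¹ * (periodicBernoulli 1 s * ψ (c * s)) := fun s => by
    rw [hψ]; field_simp
  simp only [hscale, integral_const_mul, integral_Ioi_periodicBernoulli_one_mul_comp_mul ψ hc,
    hψ₀, hψ'']
  field_simp
  ring

end HalfLine

theorem g_ae_eq_neg_pi_mul_periodicBernoulli_one :
    g =ᵐ[volume] fun s => -π * periodicBernoulli 1 s := by
  filter_upwards [measure_eq_zero_iff_ae_notMem.mp
    ((countable_range ((↑) : ℤ → ℝ)).measure_zero volume)] with s hs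
  rw [g, if_neg (show ¬∃ n : ℤ, (n : ℝ) = s from hs), periodicBernoulli_one_apply]
  ring

/-- The regularized Casimir integral: for every Schwartz function `φ` with `φ(0) = 1`,
`∫_0^∞ s² g(s) φ(λs) ds → -π/360` as the cut-off ratio `λ → 0⁺`. -/
theorem casimir_energy_limit (φ : SchwartzMap ℝ ℝ) (hφ : φ 0 = 1) :
    Filter.Tendsto
      (fun lam : ℝ => ∫ s in Set.Ioi (0 : ℝ), s ^ 2 * g s * φ (lam * s))
      (𝓝[>] 0) (𝓝 (-Real.pi / 360)) := by
  obtain ⟨C, hC⟩ := exists_abs_periodicBernoulli_le 5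
  have hlim : Tendsto (fun c => ∫ s in Ioi 0, periodicBernoulli 1 s * (s ^ 2 * φ (c * s)))
      (𝓝[>] 0) (𝓝 (φ 0 / 360)) := by
    have hrem := (tendsto_const_nhds (x := φ 0 / 360)).add
      (tendsto_sq_mul_integral_Ioi_mul_comp_mul
        hC (𝒟 (𝒟 (𝒟 (𝒟 (smulLeftCLM ℝ (fun u : ℝ => u ^ 2) φ))))).integrable)
    rw [add_zero] at hrem
    refine hrem.congr' ?_
    filter_upwards [self_mem_nhdsWithin] with c (hc : 0 < c)
    exact (integral_Ioi_periodicBernoulli_one_mul_sq_mul_comp_mul φ hc).symm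
  have hg : ∀ c, ∫ s in Ioi 0, s ^ 2 * g s * φ (c * s) =
      -π * ∫ s in Ioi 0, periodicBernoulli 1 s * (s ^ 2 * φ (c * s)) := fun c => by
    rw [← integral_const_mul]
    refine integral_congr_ae (ae_restrict_of_ae ?_)
    filter_upwards [g_ae_eq_neg_pi_mul_periodicBernoulli_one] with s hs
    rw [hs]; ring
  simp only [hg]
  convert hlim.const_mul (-π) using 2
  rw [hφ]; ring
end
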